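/- arXiv:1807.11617 — 4 statements merged into one kernel-verified Lean document; each statement's English description precedes it below -/
import Mathlib

section
/- Let G be a finite simple graph such that every subgraph of G on n vertices has at most k·n edges (for a fixed positive real k). Then Σ_{vw∈E(G)} deg(v)·deg(w) ≤ 16·k·Δ(G)·|E(G)| ≤ 16·k²·Δ(G)·|V(G)|. -/
open Finset

private lemma card_edges_inside_le {V : Type*} [Fintype V] [DecidableEq V]
    (G : SimpleGraph V) [DecidableRel G.Adj] (S : Finset V) :
    ((G.edgeFinset.filter fun e => ∀ v ∈ e, v ∈ S)).card
      ≤ (G.induce (S : Set V)).edgeFinset.card := by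
  classical
  apply Finset.card_le_card_of_surjOn (Sym2.map Subtype.val)
  intro e he
  simp only [Finset.coe_filter, Set.mem_setOf_eq] at he
  obtain ⟨heE, hmem⟩ := he
  induction e using Sym2.ind with
  | _ u v =>
    have hadj : G.Adj u v := by
      rwa [SimpleGraph.mem_edgeFinset, SimpleGraph.mem_edgeSet] at heE
    have hu : u ∈ (S : Set V) := by exact_mod_cast hmem u (by simp)
    have hv : v ∈ (S : Set V) := by exact_mod_cast hmem v (by simp)
    refine ⟨s(⟨u, hu⟩, ⟨v, hv⟩), ?_, ?_⟩
    · simp only [Finset.mem_coe, SimpleGraph.mem_edgeFinset, SimpleGraph.mem_edgeSet,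
        SimpleGraph.comap_adj]
      exact hadj
    · simp

private def mind {V : Type*} [Fintype V] [DecidableEq V] (G : SimpleGraph V)
    [DecidableRel G.Adj] : Sym2 V → ℕ :=
  Sym2.lift ⟨fun u w => min (G.degree u) (G.degree w), fun _ _ => Nat.min_comm _ _⟩

private lemma mind_mk {V : Type*} [Fintype V] [DecidableEq V] (G : SimpleGraph V)
    [DecidableRel G.Adj] (u w : V) : mind G s(u, w) = min (G.degree u) (G.degree w) := rfl

/-- If every subgraph of `G` on `n` vertices has at most `k·n` edges, then
`Σ_{vw∈E(G)} deg(v)·deg(w) ≤ 16·k·Δ(G)·|E(G)| ≤ 16·k²·Δ(G)·|V(G)|`. -/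
theorem stmt_5 {V : Type*} [Fintype V] [DecidableEq V] (G : SimpleGraph V)
    [DecidableRel G.Adj] (k : ℝ) (hk : 0 < k)
    (hsparse : ∀ S : Finset V,
      ((G.induce (S : Set V)).edgeFinset.card : ℝ) ≤ k * S.card) :
    ((∑ e ∈ G.edgeFinset,
        Sym2.lift ⟨fun v w => G.degree v * G.degree w, fun _ _ => Nat.mul_comm _ _⟩ e : ℕ) : ℝ) ≤
        16 * k * G.maxDegree * G.edgeFinset.card ∧
      (16 * k * G.maxDegree * G.edgeFinset.card : ℝ) ≤
        16 * k ^ 2 * G.maxDegree * Fintype.card V := by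
  classical
  have hΔ0 : (0:ℝ) ≤ (G.maxDegree : ℝ) := Nat.cast_nonneg _
  have hE0 : (0:ℝ) ≤ (G.edgeFinset.card : ℝ) := Nat.cast_nonneg _
  have layer : ∀ a : ℕ, a ≤ G.maxDegree →
      ((Finset.range G.maxDegree).filter (fun t => t < a)).card = a := by
    intro a ha
    have h : (Finset.range G.maxDegree).filter (fun t => t < a) = Finset.range a := by
      ext t; simp only [Finset.mem_filter, Finset.mem_range]; omega
    rw [h, Finset.card_range]
  -- Step A : pointwise  deg u * deg w ≤ Δ * min
  have stepA : (∑ e ∈ G.edgeFinset,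
      Sym2.lift ⟨fun v w => G.degree v * G.degree w, fun _ _ => Nat.mul_comm _ _⟩ e)
      ≤ G.maxDegree * ∑ e ∈ G.edgeFinset, mind G e := by
    rw [Finset.mul_sum]
    apply Finset.sum_le_sum
    intro e _
    induction e using Sym2.ind with
    | _ u w =>
      have hb : Sym2.lift ⟨fun v w => G.degree v * G.degree w, fun _ _ => Nat.mul_comm _ _⟩
          s(u, w) = G.degree u * G.degree w := rfl
      rw [hb, mind_mk]
      have h1 := G.degree_le_maxDegree u
      have h2 := G.degree_le_maxDegree w
      rcases Nat.le_total (G.degree u) (G.degree w) with h | h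
      · rw [min_eq_left h]
        calc G.degree u * G.degree w = G.degree w * G.degree u := Nat.mul_comm _ _
          _ ≤ G.maxDegree * G.degree u := Nat.mul_le_mul_right _ h2
      · rw [min_eq_right h]
        exact Nat.mul_le_mul_right _ h1
  -- Step B : layer cake
  have stepB : ∑ e ∈ G.edgeFinset, mind G e
      = ∑ t ∈ Finset.range G.maxDegree,
          (G.edgeFinset.filter (fun e => t < mind G e)).card := by
    simp only [Finset.card_filter]
    rw [Finset.sum_comm]
    apply Finset.sum_congr rfl
    intro e _
    have hmle : mind G e ≤ G.maxDegree := by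
      induction e using Sym2.ind with
      | _ u w =>
        rw [mind_mk]
        exact le_trans (Nat.min_le_left _ _) (G.degree_le_maxDegree u)
    calc mind G e = ((Finset.range G.maxDegree).filter (fun t => t < mind G e)).card :=
          (layer _ hmle).symm
      _ = ∑ t ∈ Finset.range G.maxDegree, if t < mind G e then 1 else 0 :=
          Finset.card_filter _ _
  -- Step C : per-level sparsity bound
  have stepC : ∀ t : ℕ, ((G.edgeFinset.filter (fun e => t < mind G e)).card : ℝ)
      ≤ k * ((univ.filter (fun v => t < G.degree v)).card : ℝ) := by
    intro t
    set S : Finset V := univ.filter (fun v => t < G.degree v) with hS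
    have hsub : G.edgeFinset.filter (fun e => t < mind G e)
        ⊆ G.edgeFinset.filter (fun e => ∀ v ∈ e, v ∈ S) := by
      intro e he
      rw [Finset.mem_filter] at he ⊢
      obtain ⟨heE, hlt⟩ := he
      refine ⟨heE, ?_⟩
      induction e using Sym2.ind with
      | _ u w =>
        rw [mind_mk] at hlt
        intro v hv
        rw [Sym2.mem_iff] at hv
        simp only [hS, Finset.mem_filter, Finset.mem_univ, true_and]
        rcases hv with rfl | rfl
        · exact lt_of_lt_of_le hlt (Nat.min_le_left _ _)
        · exact lt_of_lt_of_le hlt (Nat.min_le_right _ _)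
    calc ((G.edgeFinset.filter (fun e => t < mind G e)).card : ℝ)
        ≤ ((G.induce (S : Set V)).edgeFinset.card : ℝ) := by
          exact_mod_cast le_trans (Finset.card_le_card hsub) (card_edges_inside_le G S)
      _ ≤ k * S.card := hsparse S
  -- Step D : sum of level sizes = sum of degrees = 2|E|
  have stepD : ∑ t ∈ Finset.range G.maxDegree,
      (univ.filter (fun v => t < G.degree v)).card = 2 * G.edgeFinset.card := by
    rw [← SimpleGraph.sum_degrees_eq_twice_card_edges]
    simp only [Finset.card_filter]
    rw [Finset.sum_comm]
    apply Finset.sum_congr rfl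
    intro v _
    calc (∑ t ∈ Finset.range G.maxDegree, if t < G.degree v then 1 else 0)
        = ((Finset.range G.maxDegree).filter (fun t => t < G.degree v)).card :=
          (Finset.card_filter _ _).symm
      _ = G.degree v := layer _ (G.degree_le_maxDegree v)
  -- assemble
  have h2 : ((∑ e ∈ G.edgeFinset, mind G e : ℕ) : ℝ) ≤ k * (2 * G.edgeFinset.card) := by
    rw [stepB]
    push_cast
    calc (∑ t ∈ Finset.range G.maxDegree,
          ((G.edgeFinset.filter (fun e => t < mind G e)).card : ℝ))
        ≤ ∑ t ∈ Finset.range G.maxDegree,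
            k * ((univ.filter (fun v => t < G.degree v)).card : ℝ) :=
          Finset.sum_le_sum (fun t _ => stepC t)
      _ = k * ((∑ t ∈ Finset.range G.maxDegree,
            (univ.filter (fun v => t < G.degree v)).card : ℕ) : ℝ) := by
          rw [← Finset.mul_sum]; push_cast; ring
      _ = k * (2 * G.edgeFinset.card) := by rw [stepD]; push_cast; ring
  have h1 : ((∑ e ∈ G.edgeFinset,
      Sym2.lift ⟨fun v w => G.degree v * G.degree w, fun _ _ => Nat.mul_comm _ _⟩ e : ℕ) : ℝ)
      ≤ (G.maxDegree : ℝ) * ((∑ e ∈ G.edgeFinset, mind G e : ℕ) : ℝ) := by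
    rw [← Nat.cast_mul]
    exact_mod_cast stepA
  have hE : (G.edgeFinset.card : ℝ) ≤ k * Fintype.card V := by
    have hfil : G.edgeFinset.filter (fun e => ∀ v ∈ e, v ∈ (univ : Finset V)) = G.edgeFinset :=
      Finset.filter_true_of_mem (fun e _ => fun v _ => Finset.mem_univ v)
    have h1 : G.edgeFinset.card ≤ (G.induce ((univ : Finset V) : Set V)).edgeFinset.card := by
      have := card_edges_inside_le G univ
      rwa [hfil] at this
    calc (G.edgeFinset.card : ℝ) ≤ _ := Nat.cast_le.mpr h1
      _ ≤ k * (univ : Finset V).card := hsparse univ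
      _ = k * Fintype.card V := by rw [Finset.card_univ]
  constructor
  · nlinarith [mul_le_mul_of_nonneg_left h2 hΔ0,
      mul_nonneg (mul_nonneg hk.le hΔ0) hE0]
  · nlinarith [mul_le_mul_of_nonneg_left hE (by positivity : (0:ℝ) ≤ 16 * k * (G.maxDegree:ℝ))]
end

section
/- Let cr be an isomorphism-invariant function from finite simple graphs to nonnegative reals such that cr(G) = cr(G') whenever G' is obtained from G by subdividing every edge once. Let X be a class of graphs closed under taking subdivisions, and suppose cr(G) ≤ c · Σ_{vw∈E(G)} deg(v)·deg(w) for every G ∈ X. Then cr(G) ≤ 2c · Σ_{v∈V(G)} deg(v)² for every G ∈ X. -/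
open Finset

universe u

variable {V : Type u}

/-- The graph obtained from `G` by subdividing every edge exactly once. -/
def subdivision (G : SimpleGraph V) : SimpleGraph (V ⊕ G.edgeSet) where
  Adj x y :=
    match x, y with
    | Sum.inl v, Sum.inr e => v ∈ (e : Sym2 V)
    | Sum.inr e, Sum.inl v => v ∈ (e : Sym2 V)
    | _, _ => False
  symm := by constructor; rintro (v | e) (w | f) h <;> simp_all
  loopless := by constructor; rintro (v | e) h <;> simp_all

instance (G : SimpleGraph V) [DecidableEq V] : DecidableRel (subdivision G).Adj := by
  rintro (v | e) (w | f)
  · exact inferInstanceAs (Decidable False)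
  · exact inferInstanceAs (Decidable (v ∈ (f : Sym2 V)))
  · exact inferInstanceAs (Decidable (w ∈ (e : Sym2 V)))
  · exact inferInstanceAs (Decidable False)

/-! Subdividing every edge of `G` gives a graph `G'` in `X` with `cr G' = cr G`. Every edge of `G'`
joins an original vertex `v`, whose degree is still `deg v`, to a subdivision vertex of degree `2`,
and `v` lies on exactly `deg v` such edges; hence `Σ_{xy ∈ E(G')} deg x · deg y = 2 Σ_v deg(v)²`,
and the hypothesis applied to `G'` is the claim. -/

namespace SimpleGraph

section Adj

variable (G : SimpleGraph V)

@[simp] lemma subdivision_adj_inl_inl (v w : V) : ¬(subdivision G).Adj (.inl v) (.inl w) := id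

@[simp] lemma subdivision_adj_inr_inr (e f : G.edgeSet) :
    ¬(subdivision G).Adj (.inr e) (.inr f) := id

@[simp] lemma subdivision_adj_inl_inr (v : V) (e : G.edgeSet) :
    (subdivision G).Adj (.inl v) (.inr e) ↔ v ∈ (e : Sym2 V) := .rfl

@[simp] lemma subdivision_adj_inr_inl (e : G.edgeSet) (v : V) :
    (subdivision G).Adj (.inr e) (.inl v) ↔ v ∈ (e : Sym2 V) := .rfl

end Adj

variable [Fintype V] [DecidableEq V] (G : SimpleGraph V) [DecidableRel G.Adj]

lemma card_filter_mem_edgeSet_eq_degree (v : V) :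
    #{e : G.edgeSet | v ∈ (e : Sym2 V)} = G.degree v := by
  rw [← card_incidenceFinset_eq_degree, ← card_map (Function.Embedding.subtype _)]
  congr 1
  ext e
  simp [incidenceSet, and_comm]

lemma neighborFinset_subdivision_inl (v : V) :
    (subdivision G).neighborFinset (Sum.inl v) =
      ({e : G.edgeSet | v ∈ (e : Sym2 V)} : Finset _).map Function.Embedding.inr := by
  ext (w | e) <;> simp

lemma degree_subdivision_inl (v : V) : (subdivision G).degree (Sum.inl v) = G.degree v := by
  rw [← card_neighborFinset_eq_degree, neighborFinset_subdivision_inl, card_map,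
    card_filter_mem_edgeSet_eq_degree]

lemma degree_subdivision_inr (e : G.edgeSet) : (subdivision G).degree (Sum.inr e) = 2 := by
  obtain ⟨e, he⟩ := e
  induction e with
  | h a b =>
    have hne : (subdivision G).neighborFinset (Sum.inr ⟨s(a, b), he⟩) =
        {Sum.inl a, Sum.inl b} := by
      ext (w | f) <;> simp
    rw [← card_neighborFinset_eq_degree, hne, card_pair (by simpa using G.ne_of_adj he)]

lemma edgeFinset_subdivision :
    (subdivision G).edgeFinset =
      ({p : V × G.edgeSet | p.1 ∈ (p.2 : Sym2 V)} : Finset _).image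
        fun p => s(Sum.inl p.1, Sum.inr p.2) := by
  ext z
  induction z with
  | h x y =>
    rcases x with v | e <;> rcases y with w | f <;> simp [Sym2.eq_swap]

lemma sum_edgeFinset_subdivision_degree_mul :
    ∑ e ∈ (subdivision G).edgeFinset,
      Sym2.lift ⟨fun x y => (subdivision G).degree x * (subdivision G).degree y,
        fun _ _ => Nat.mul_comm _ _⟩ e = 2 * ∑ v, G.degree v ^ 2 := by
  rw [edgeFinset_subdivision, sum_image (by simp), sum_filter, Fintype.sum_prod_type, mul_sum]
  refine sum_congr rfl fun v _ => ?_
  simp only [Sym2.lift_mk, degree_subdivision_inl, degree_subdivision_inr]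
  rw [← sum_filter, sum_const, card_filter_mem_edgeSet_eq_degree, smul_eq_mul]
  ring

end SimpleGraph

theorem stmt_7_general
    (cr : ∀ {W : Type u} [Fintype W] [DecidableEq W] (G : SimpleGraph W)
      [DecidableRel G.Adj], ℝ)
    (X : ∀ {W : Type u} [Fintype W] [DecidableEq W] (G : SimpleGraph W)
      [DecidableRel G.Adj], Prop)
    (c : ℝ)
    (hX_subdiv : ∀ {W : Type u} [Fintype W] [DecidableEq W] (G : SimpleGraph W)
      [DecidableRel G.Adj], X G → X (subdivision G))
    (hcr_subdiv : ∀ {W : Type u} [Fintype W] [DecidableEq W] (G : SimpleGraph W)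
      [DecidableRel G.Adj], cr (subdivision G) = cr G)
    (hbound : ∀ {W : Type u} [Fintype W] [DecidableEq W] (G : SimpleGraph W)
      [DecidableRel G.Adj], X G →
      cr G ≤ c * ((∑ e ∈ G.edgeFinset,
        Sym2.lift ⟨fun v w => G.degree v * G.degree w, fun _ _ => Nat.mul_comm _ _⟩ e : ℕ) : ℝ))
    {W : Type u} [Fintype W] [DecidableEq W] (G : SimpleGraph W) [DecidableRel G.Adj]
    (hG : X G) :
    cr G ≤ 2 * c * ((∑ v : W, (G.degree v) ^ 2 : ℕ) : ℝ) := by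
  have h := hbound (subdivision G) (hX_subdiv G hG)
  rw [hcr_subdiv, SimpleGraph.sum_edgeFinset_subdivision_degree_mul] at h
  calc cr G ≤ c * ((2 * ∑ v : W, G.degree v ^ 2 : ℕ) : ℝ) := h
    _ = 2 * c * ((∑ v : W, (G.degree v) ^ 2 : ℕ) : ℝ) := by push_cast; ring

/-- Let `cr` be an isomorphism-invariant graph parameter with `cr(G) = cr(G')` whenever
`G'` is obtained from `G` by subdividing every edge once, let `X` be a class of graphs
closed under subdivisions, and suppose `cr(G) ≤ c · Σ_{vw∈E(G)} deg(v)·deg(w)` on `X`.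
Then `cr(G) ≤ 2c · Σ_{v∈V(G)} deg(v)²` on `X`. -/
theorem stmt_7
    (cr : ∀ {W : Type u} [Fintype W] [DecidableEq W] (G : SimpleGraph W)
      [DecidableRel G.Adj], ℝ)
    (X : ∀ {W : Type u} [Fintype W] [DecidableEq W] (G : SimpleGraph W)
      [DecidableRel G.Adj], Prop)
    (c : ℝ) (hc : 0 ≤ c)
    (cr_nonneg : ∀ {W : Type u} [Fintype W] [DecidableEq W] (G : SimpleGraph W)
      [DecidableRel G.Adj], 0 ≤ cr G)
    (hX_subdiv : ∀ {W : Type u} [Fintype W] [DecidableEq W] (G : SimpleGraph W)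
      [DecidableRel G.Adj], X G → X (subdivision G))
    (hcr_subdiv : ∀ {W : Type u} [Fintype W] [DecidableEq W] (G : SimpleGraph W)
      [DecidableRel G.Adj], cr (subdivision G) = cr G)
    (hbound : ∀ {W : Type u} [Fintype W] [DecidableEq W] (G : SimpleGraph W)
      [DecidableRel G.Adj], X G →
      cr G ≤ c * ((∑ e ∈ G.edgeFinset,
        Sym2.lift ⟨fun v w => G.degree v * G.degree w, fun _ _ => Nat.mul_comm _ _⟩ e : ℕ) : ℝ))
    {W : Type u} [Fintype W] [DecidableEq W] (G : SimpleGraph W) [DecidableRel G.Adj]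
    (hG : X G) :
    cr G ≤ 2 * c * ((∑ v : W, (G.degree v) ^ 2 : ℕ) : ℝ) :=
  stmt_7_general cr X c hX_subdiv hcr_subdiv hbound G hG
end

section
/- Let G be a finite simple graph and let ≼ be a linear order on V(G) such that if u ≺ v ≺ w and uw ∈ E(G), then uv ∈ E(G). For a vertex v, let d_v be its out-degree (number of neighbours w with v ≺ w). Then the number of 4-tuples (x, v, y, w) with x ≺ v ≺ y ≺ w, xy ∈ E(G), and vw ∈ E(G) is at most (1/2)·(ω(G)−2)·Σ_{v∈V(G)} d_v(d_v − 1), where ω(G) is the clique number of G. -/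
/-!
Sending `(x, v, y, w)` to `(v, y, w)` lands in the triples with `v < y < w` and `v` adjacent to
both `y` and `w` (`vy` is an edge by the ordering condition applied to `v < y < w`). Over a fixed
triple, `x` ranges over neighbours of `y` below `v`; together with `v` and `y` these lie in `y`
plus its in-neighbourhood, which is a clique, so there are at most `ω - 2` of them. The triples
with first entry `v` are the pairs `y < w` of out-neighbours of `v`, of which there are
`d_v (d_v - 1) / 2`.
-/

open Finset

namespace SimpleGraph

variable {V : Type*} [LinearOrder V] (G : SimpleGraph V)

def IsIntervalOrdering : Prop := ∀ u v w : V, u < v → v < w → G.Adj u w → G.Adj u v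

section Fintype

variable [Fintype V] [DecidableRel G.Adj]

def outNeighborFinset (v : V) : Finset V := {w | v < w ∧ G.Adj v w}

/-- Pairs of edges `xy`, `vw` that cross when `V` is placed on a circle in increasing order. -/
def crossingQuadruples : Finset (V × V × V × V) :=
  {t | t.1 < t.2.1 ∧ t.2.1 < t.2.2.1 ∧ t.2.2.1 < t.2.2.2 ∧ G.Adj t.1 t.2.2.1 ∧ G.Adj t.2.1 t.2.2.2}

def outCherries : Finset (V × V × V) :=
  {p | p.1 < p.2.1 ∧ p.2.1 < p.2.2 ∧ G.Adj p.1 p.2.1 ∧ G.Adj p.1 p.2.2}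

end Fintype

variable {G}

theorem IsIntervalOrdering.isClique_insert_inNeighbors (hG : G.IsIntervalOrdering) (y : V) :
    G.IsClique (insert y {x | x < y ∧ G.Adj x y}) := by
  refine IsClique.insert (fun a ha b hb hab => ?_) fun x hx _ => hx.2.symm
  rcases lt_or_gt_of_ne hab with h | h
  · exact hG a b y h hb.1 ha.2
  · exact (hG b a y h ha.1 hb.2).symm

variable [Fintype V] [DecidableRel G.Adj]

theorem IsIntervalOrdering.card_lt_adj_add_two_le_cliqueNum (hG : G.IsIntervalOrdering)
    {v y : V} (hvy : v < y) (hadj : G.Adj v y) :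
    #{x | x < v ∧ G.Adj x y} + 2 ≤ G.cliqueNum := by
  set S : Finset V := {x | x < v ∧ G.Adj x y}
  have hy : y ∉ S := by simp [S, hvy.not_gt]
  have hv : v ∉ insert y S := by simp [S, hvy.ne]
  have hclique : G.IsClique (insert v (insert y S) : Finset V) := by
    refine (hG.isClique_insert_inNeighbors y).subset ?_
    intro x hx
    simp only [coe_insert, coe_filter, mem_univ, true_and, Set.mem_insert_iff, Set.mem_ofPred_eq,
      S] at hx ⊢
    rcases hx with rfl | rfl | ⟨hxv, hxy⟩
    · exact .inr ⟨hvy, hadj⟩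
    · exact .inl rfl
    · exact .inr ⟨hxv.trans hvy, hxy⟩
  calc #S + 2 = #(insert v (insert y S)) := by
        rw [card_insert_of_notMem hv, card_insert_of_notMem hy]
    _ ≤ G.cliqueNum := hclique.card_le_cliqueNum

theorem IsIntervalOrdering.card_crossingQuadruples_le (hG : G.IsIntervalOrdering) :
    #G.crossingQuadruples ≤ (G.cliqueNum - 2) * #G.outCherries := by
  refine card_le_mul_card_image_of_maps_to (f := Prod.snd) ?_ _ ?_
  · rintro ⟨x, v, y, w⟩ ht
    simp only [crossingQuadruples, outCherries, mem_filter, mem_univ, true_and] at ht ⊢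
    obtain ⟨-, hvy, hyw, -, hvw⟩ := ht
    exact ⟨hvy, hyw, hG v y w hvy hyw hvw, hvw⟩
  · rintro ⟨v, y, w⟩ hp
    simp only [outCherries, mem_filter, mem_univ, true_and] at hp
    have hfiber : #{t ∈ G.crossingQuadruples | t.2 = (v, y, w)} ≤ #{x | x < v ∧ G.Adj x y} := by
      refine card_le_card_of_injOn Prod.fst ?_ fun t ht s hs hts => Prod.ext hts ?_
      · rintro ⟨x, v', y', w'⟩ ht
        simp only [crossingQuadruples, coe_filter, mem_filter, mem_univ, true_and,
          Set.mem_ofPred_eq, Prod.mk.injEq] at ht ⊢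
        obtain ⟨⟨hxv, -, -, hxy, -⟩, rfl, rfl, rfl⟩ := ht
        exact ⟨hxv, hxy⟩
      · simp only [coe_filter, Set.mem_ofPred_eq] at ht hs
        rw [ht.2, hs.2]
    have := hG.card_lt_adj_add_two_le_cliqueNum hp.1 hp.2.2.1
    omega

variable (G) in
theorem card_outCherries :
    #G.outCherries = ∑ v, (#(G.outNeighborFinset v)).choose 2 := by
  have hpairs (v : V) : {q ∈ G.outNeighborFinset v ×ˢ G.outNeighborFinset v | q.1 < q.2} =
      ({q : V × V | v < q.1 ∧ q.1 < q.2 ∧ G.Adj v q.1 ∧ G.Adj v q.2} : Finset _) := by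
    ext ⟨y, w⟩
    simp only [outNeighborFinset, mem_filter, mem_product, mem_univ, true_and]
    exact ⟨fun ⟨⟨⟨hy, hay⟩, _, haw⟩, hyw⟩ => ⟨hy, hyw, hay, haw⟩,
      fun ⟨hy, hyw, hay, haw⟩ => ⟨⟨⟨hy, hay⟩, hy.trans hyw, haw⟩, hyw⟩⟩
  simp_rw [← card_product_filter_lt, hpairs, card_filter]
  rw [outCherries, card_filter, Fintype.sum_prod_type]

variable (G) in
theorem two_mul_card_outCherries :
    2 * #G.outCherries = ∑ v, #(G.outNeighborFinset v) * (#(G.outNeighborFinset v) - 1) := by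
  rw [card_outCherries, mul_sum]
  exact sum_congr rfl fun v _ => by
    rw [Nat.choose_two_right, Nat.two_mul_div_two_of_even (Nat.even_mul_pred_self _)]

end SimpleGraph

/-- Let `≼` be a linear order on the vertices of `G` such that `u ≺ v ≺ w` and
`uw ∈ E(G)` imply `uv ∈ E(G)` (an interval-graph ordering).  With `d_v` the out-degree of
`v`, the number of 4-tuples `(x, v, y, w)` with `x ≺ v ≺ y ≺ w`, `xy ∈ E(G)` and
`vw ∈ E(G)` is at most `(1/2)·(ω(G) − 2)·Σ_v d_v(d_v − 1)` (stated multiplied by 2). -/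
theorem stmt_9 {V : Type*} [Fintype V] [LinearOrder V] (G : SimpleGraph V)
    [DecidableRel G.Adj]
    (hinterval : ∀ u v w : V, u < v → v < w → G.Adj u w → G.Adj u v) :
    2 * (Finset.univ.filter (fun t : V × V × V × V =>
          t.1 < t.2.1 ∧ t.2.1 < t.2.2.1 ∧ t.2.2.1 < t.2.2.2 ∧
          G.Adj t.1 t.2.2.1 ∧ G.Adj t.2.1 t.2.2.2)).card ≤
      (G.cliqueNum - 2) *
        ∑ v : V, (Finset.univ.filter (fun w => v < w ∧ G.Adj v w)).card *
          ((Finset.univ.filter (fun w => v < w ∧ G.Adj v w)).card - 1) := by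
  have hG : G.IsIntervalOrdering := hinterval
  calc 2 * #G.crossingQuadruples ≤ 2 * ((G.cliqueNum - 2) * #G.outCherries) := by
        gcongr; exact hG.card_crossingQuadruples_le
    _ = (G.cliqueNum - 2) * (2 * #G.outCherries) := by ring
    _ = _ := by rw [G.two_mul_card_outCherries]; rfl
end

section
/- Let G be a finite simple graph with a linear order ≼ on V(G) such that u ≺ v ≺ w and uw ∈ E(G) implies uv ∈ E(G) (i.e., G is an interval graph in vertex order ≼), and suppose ω(G) ≤ k+1. Then for any spanning subgraph H of G with maximum degree Δ, the number of 4-tuples (x, v, y, w) with x ≺ v ≺ y ≺ w and xy, vw ∈ E(H) is at most k²·Δ·|V(G)|. -/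
/-!
Every crossing `(x, v, y, w)` is determined by `y`, by `v`, which is an in-neighbour of `y`
because `vw ∈ E(G)` forces `vy ∈ E(G)`, by `x`, an in-neighbour of `v` because `xy ∈ E(G)`
forces `xv ∈ E(G)`, and by `w`, an `H`-neighbour of `v`. In the vertex order of an interval
graph the in-neighbours of a vertex together with it form a clique, so there are at most `k`
of them; this leaves at most `|V(G)| · k · k · Δ` choices.
-/

open Finset

namespace SimpleGraph

variable {V : Type*} [Fintype V] [LinearOrder V]

def inNeighborFinset (G : SimpleGraph V) [DecidableRel G.Adj] (v : V) : Finset V :=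
  {u | u < v ∧ G.Adj u v}

def crossings (H : SimpleGraph V) [DecidableRel H.Adj] : Finset (V × V × V × V) :=
  {t | t.1 < t.2.1 ∧ t.2.1 < t.2.2.1 ∧ t.2.2.1 < t.2.2.2 ∧
    H.Adj t.1 t.2.2.1 ∧ H.Adj t.2.1 t.2.2.2}

variable {G : SimpleGraph V} [DecidableRel G.Adj]

@[simp]
lemma mem_inNeighborFinset {u v : V} : u ∈ G.inNeighborFinset v ↔ u < v ∧ G.Adj u v := by
  simp [inNeighborFinset]

lemma isClique_insert_inNeighborFinset
    (hG : ∀ u v w : V, u < v → v < w → G.Adj u w → G.Adj u v) (v : V) :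
    G.IsClique (insert v (G.inNeighborFinset v) : Set V) := by
  refine isClique_insert.mpr
    ⟨fun a ha b hb hab => ?_, fun u hu _ => (mem_inNeighborFinset.mp hu).2.symm⟩
  simp only [mem_coe, mem_inNeighborFinset] at ha hb
  rcases hab.lt_or_gt with h | h
  · exact hG a b v h hb.1 ha.2
  · exact (hG b a v h ha.1 hb.2).symm

lemma card_inNeighborFinset_le
    (hG : ∀ u v w : V, u < v → v < w → G.Adj u w → G.Adj u v)
    {k : ℕ} (hω : G.cliqueNum ≤ k + 1) (v : V) : #(G.inNeighborFinset v) ≤ k := by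
  have hclique := isClique_insert_inNeighborFinset hG v
  rw [← coe_insert] at hclique
  have hcard := hclique.card_le_cliqueNum
  rw [card_insert_of_notMem (by simp)] at hcard
  omega

lemma crossings_subset_biUnion
    (hG : ∀ u v w : V, u < v → v < w → G.Adj u w → G.Adj u v)
    {H : SimpleGraph V} [DecidableRel H.Adj] (hHG : H ≤ G) :
    H.crossings ⊆ univ.biUnion fun y => (G.inNeighborFinset y).biUnion fun v =>
      (G.inNeighborFinset v ×ˢ H.neighborFinset v).image fun p => (p.1, v, y, p.2) := by
  rintro ⟨x, v, y, w⟩ ht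
  obtain ⟨hxv, hvy, hyw, hxy, hvw⟩ : x < v ∧ v < y ∧ y < w ∧ H.Adj x y ∧ H.Adj v w := by
    simpa [crossings] using ht
  simp only [mem_biUnion, mem_univ, true_and, mem_image, mem_product, mem_inNeighborFinset,
    mem_neighborFinset]
  have hxv' : G.Adj x v := hG x v y hxv hvy (hHG hxy)
  exact ⟨y, v, ⟨hvy, hG v y w hvy hyw (hHG hvw)⟩, (x, w), ⟨⟨hxv, hxv'⟩, hvw⟩, rfl⟩

end SimpleGraph

open SimpleGraph in
/-- Let `G` be an interval graph in the vertex order `≼` with clique number at most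
`k + 1`.  For any spanning subgraph `H ≤ G` with maximum degree `Δ`, the number of
4-tuples `(x, v, y, w)` with `x ≺ v ≺ y ≺ w` and `xy, vw ∈ E(H)` is at most
`k²·Δ·|V(G)|`. -/
theorem stmt_10 {V : Type*} [Fintype V] [LinearOrder V] (G : SimpleGraph V)
    [DecidableRel G.Adj]
    (hinterval : ∀ u v w : V, u < v → v < w → G.Adj u w → G.Adj u v)
    (k : ℕ) (hω : G.cliqueNum ≤ k + 1)
    (H : SimpleGraph V) [DecidableRel H.Adj] (hHG : H ≤ G)
    (Δ : ℕ) (hΔ : ∀ v : V, H.degree v ≤ Δ) :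
    (Finset.univ.filter (fun t : V × V × V × V =>
        t.1 < t.2.1 ∧ t.2.1 < t.2.2.1 ∧ t.2.2.1 < t.2.2.2 ∧
        H.Adj t.1 t.2.2.1 ∧ H.Adj t.2.1 t.2.2.2)).card ≤
      k ^ 2 * Δ * Fintype.card V := by
  have hin := card_inNeighborFinset_le hinterval hω
  calc #H.crossings
      ≤ #(univ.biUnion fun y => (G.inNeighborFinset y).biUnion fun v =>
          (G.inNeighborFinset v ×ˢ H.neighborFinset v).image fun p => (p.1, v, y, p.2)) :=
        card_le_card (crossings_subset_biUnion hinterval hHG)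
    _ ≤ #(univ : Finset V) * (k * (k * Δ)) := by
        refine card_biUnion_le_card_mul _ _ _ fun y _ => ?_
        refine (card_biUnion_le_card_mul _ _ _ fun v _ => ?_).trans
          (Nat.mul_le_mul_right _ (hin y))
        calc _ ≤ #(G.inNeighborFinset v ×ˢ H.neighborFinset v) := card_image_le
          _ = #(G.inNeighborFinset v) * H.degree v := by
            rw [card_product, card_neighborFinset_eq_degree]
          _ ≤ k * Δ := Nat.mul_le_mul (hin v) (hΔ v)
    _ = k ^ 2 * Δ * Fintype.card V := by rw [card_univ]; ring
end
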